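/- If F(T) is a von Neumann subalgebra of B(H), then F(T) equals the commutant of the set {L_ℓ, L_ℓ*, H : ℓ ≥ 1} of operators in any GKSL representation of the generator. -/

import Mathlib

/-!
A GKSL generator `𝓛` has the Lindblad dissipation identity
`𝓛(x* x) - 𝓛(x*) x - x* 𝓛(x) = ∑ ℓ [Lℓ, x]* [Lℓ, x]`, the Hamiltonian part being a derivation.
If `F(T) = ker 𝓛` is a `*`-algebra, then for `x ∈ F(T)` the left side vanishes, so every
`[Lℓ, x]` vanishes by positivity; applied to `x*` this also gives `[Lℓ*, x] = 0`. Then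
`𝓛 x = i [H, x]`, so `x` commutes with `H` too. Conversely, on the commutant `𝓛` vanishes.
-/

open NormedSpace

section Semigroup

variable {E : Type*} [NormedAddCommGroup E] [NormedSpace ℂ E] [CompleteSpace E]

theorem hasDerivAt_exp_smul_apply (A : E →L[ℂ] E) (x : E) (t : ℝ) :
    HasDerivAt (fun u : ℝ => exp (u • A) x) (exp (t • A) (A x)) t :=
  ((ContinuousLinearMap.apply ℂ E x).restrictScalars ℝ).hasFDerivAt.comp_hasDerivAt t
    (hasDerivAt_exp_smul_const A t)

theorem exp_smul_apply_eq_self_iff (A : E →L[ℂ] E) (x : E) :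
    (∀ t : ℝ, 0 ≤ t → exp (t • A) x = x) ↔ A x = 0 := by
  constructor
  · intro h
    have hconst : (fun u : ℝ => exp (u • A) x) =ᶠ[nhds 1] fun _ => x := by
      filter_upwards [Ioi_mem_nhds zero_lt_one] with t ht using h t ht.le
    have h0 : exp A (A x) = 0 := by
      simpa using (hasDerivAt_exp_smul_apply A x 1).unique
        ((hasDerivAt_const 1 x).congr_of_eventuallyEq hconst)
    calc A x = A (exp A x) := by simpa using congrArg A (h 1 zero_le_one).symm
      _ = exp A (A x) := congrFun (congrArg DFunLike.coe ((Commute.refl A).exp_right).eq) x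
      _ = 0 := h0
  · intro hA t _
    have hderiv (u : ℝ) : HasDerivAt (fun u : ℝ => exp (u • A) x) 0 u := by
      simpa [hA] using hasDerivAt_exp_smul_apply A x u
    simpa using is_const_of_deriv_eq_zero (fun u => (hderiv u).differentiableAt)
      (fun u => (hderiv u).deriv) t 0

end Semigroup

section GKSL

variable {A ι : Type*} [Ring A] [StarRing A] [Algebra ℂ A] [Fintype ι]

noncomputable def gksl (H : A) (L : ι → A) (y : A) : A :=
  Complex.I • (H * y - y * H) - (1 / 2 : ℂ) • ∑ ℓ, (star (L ℓ) * L ℓ * y -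
    2 * (star (L ℓ) * y * L ℓ) + y * (star (L ℓ) * L ℓ))

theorem gksl_star_mul_self_sub (H : A) (L : ι → A) (x : A) :
    gksl H L (star x * x) - gksl H L (star x) * x - star x * gksl H L x =
      ∑ ℓ, star (L ℓ * x - x * L ℓ) * (L ℓ * x - x * L ℓ) := by
  set δ : A → A := fun y => H * y - y * H
  set D : A → A := fun y => ∑ ℓ, (star (L ℓ) * L ℓ * y - 2 * (star (L ℓ) * y * L ℓ) +
    y * (star (L ℓ) * L ℓ))
  have hδ : δ (star x * x) - δ (star x) * x - star x * δ x = 0 := by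
    simp only [δ]
    noncomm_ring
  have hD : D (star x * x) - D (star x) * x - star x * D x =
      -(2 : ℂ) • ∑ ℓ, star (L ℓ * x - x * L ℓ) * (L ℓ * x - x * L ℓ) := by
    simp only [D, Finset.sum_mul, Finset.mul_sum, ← Finset.sum_sub_distrib, Finset.smul_sum]
    refine Finset.sum_congr rfl fun ℓ _ => ?_
    simp only [star_sub, star_mul, neg_smul, two_smul]
    noncomm_ring
  have hgksl (y : A) : gksl H L y = Complex.I • δ y - (1 / 2 : ℂ) • D y := rfl
  calc _ = Complex.I • (δ (star x * x) - δ (star x) * x - star x * δ x) -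
        (1 / 2 : ℂ) • (D (star x * x) - D (star x) * x - star x * D x) := by
        simp only [hgksl, smul_sub, sub_mul, mul_sub, smul_mul_assoc, mul_smul_comm]
        abel
    _ = _ := by
        rw [hδ, hD, smul_zero, zero_sub, smul_smul, ← neg_smul]
        norm_num

theorem gksl_of_commute (H : A) (L : ι → A) {x : A}
    (hx : ∀ ℓ, Commute x (L ℓ) ∧ Commute x (star (L ℓ))) :
    gksl H L x = Complex.I • (H * x - x * H) := by
  have hdiss (ℓ : ι) : star (L ℓ) * L ℓ * x - 2 * (star (L ℓ) * x * L ℓ) +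
      x * (star (L ℓ) * L ℓ) = 0 := by
    rw [mul_assoc, ← (hx ℓ).1.eq, ← mul_assoc, ← mul_assoc x, (hx ℓ).2.eq]
    noncomm_ring
  simp [gksl, hdiss]

end GKSL

theorem eq_zero_of_sum_star_mul_self_eq_zero {A ι : Type*} [NonUnitalNormedRing A] [StarRing A]
    [CStarRing A] [PartialOrder A] [StarOrderedRing A] {s : Finset ι} {c : ι → A}
    (h : ∑ i ∈ s, star (c i) * c i = 0) {i : ι} (hi : i ∈ s) : c i = 0 := by
  rw [← CStarRing.star_mul_self_eq_zero_iff]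
  exact (Finset.sum_eq_zero_iff_of_nonneg fun j _ => star_mul_self_nonneg (c j)).mp h i hi

section CStarAlgebra

variable {A ι : Type*} [CStarAlgebra A] [PartialOrder A] [StarOrderedRing A] [Fintype ι]

theorem commute_of_gksl_eq_zero {H : A} {L : ι → A} {x : A} (hx : gksl H L x = 0)
    (hxs : gksl H L (star x) = 0) (hxx : gksl H L (star x * x) = 0) (ℓ : ι) :
    Commute x (L ℓ) := by
  have hsum := gksl_star_mul_self_sub H L x
  rw [hx, hxs, hxx, zero_mul, mul_zero, sub_zero, sub_zero, eq_comm] at hsum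
  exact (sub_eq_zero.mp (eq_zero_of_sum_star_mul_self_eq_zero hsum (Finset.mem_univ ℓ))).symm

theorem commute_generators_of_forall_gksl_eq_zero {H : A} {L : ι → A}
    {S : StarSubalgebra ℂ A} (hS : ∀ y ∈ S, gksl H L y = 0) {x : A} (hx : x ∈ S) :
    (∀ ℓ, Commute x (L ℓ) ∧ Commute x (star (L ℓ))) ∧ Commute x H := by
  have hL {y : A} (hy : y ∈ S) (ℓ : ι) : Commute y (L ℓ) :=
    commute_of_gksl_eq_zero (hS y hy) (hS _ (star_mem hy)) (hS _ (mul_mem (star_mem hy) hy)) ℓ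
  have hLstar (ℓ : ι) : Commute x (star (L ℓ)) := by
    simpa using (hL (star_mem hx) ℓ).star_star
  have hcomm : Complex.I • (H * x - x * H) = 0 :=
    gksl_of_commute H L (fun ℓ => ⟨hL hx ℓ, hLstar ℓ⟩) ▸ hS x hx
  refine ⟨fun ℓ => ⟨hL hx ℓ, hLstar ℓ⟩, ?_⟩
  exact (sub_eq_zero.mp ((smul_eq_zero_iff_right Complex.I_ne_zero).mp hcomm)).symm

end CStarAlgebra

theorem fixed_points_eq_commutant_general
    {Hs : Type} [NormedAddCommGroup Hs] [InnerProductSpace ℂ Hs] [CompleteSpace Hs]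
    (N : ℕ) (H : Hs →L[ℂ] Hs)
    (L : Fin N → (Hs →L[ℂ] Hs))
    (𝓛 : (Hs →L[ℂ] Hs) →L[ℂ] (Hs →L[ℂ] Hs))
    (h𝓛 : ∀ y, 𝓛 y = Complex.I • (H * y - y * H) -
      (1/2 : ℂ) • ∑ ℓ, (star (L ℓ) * L ℓ * y - 2 * (star (L ℓ) * y * L ℓ) +
        y * (star (L ℓ) * L ℓ)))
    -- `F(T)` is a von Neumann subalgebra
    (hvN : ∃ M : VonNeumannAlgebra Hs,
      (M : Set (Hs →L[ℂ] Hs)) =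
        {x | ∀ t : ℝ, 0 ≤ t → NormedSpace.exp (t • 𝓛) x = x}) :
    {x : Hs →L[ℂ] Hs | ∀ t : ℝ, 0 ≤ t → NormedSpace.exp (t • 𝓛) x = x} =
      {x | (∀ ℓ, Commute x (L ℓ) ∧ Commute x (star (L ℓ))) ∧ Commute x H} := by
  obtain ⟨M, hM⟩ := hvN
  have hfix : {x : Hs →L[ℂ] Hs | ∀ t : ℝ, 0 ≤ t → exp (t • 𝓛) x = x} =
      {x | gksl H L x = 0} := by
    ext x
    simp only [Set.mem_ofPred_eq, exp_smul_apply_eq_self_iff, h𝓛]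
    rfl
  rw [hfix] at hM ⊢
  have hmem (y : Hs →L[ℂ] Hs) : y ∈ M ↔ gksl H L y = 0 := Set.ext_iff.mp hM y
  ext x
  constructor
  · intro hx
    exact commute_generators_of_forall_gksl_eq_zero (S := M.toStarSubalgebra)
      (fun y hy => (hmem y).mp hy) ((hmem x).mpr hx)
  · rintro ⟨hL, hH⟩
    show gksl H L x = 0
    rw [gksl_of_commute H L hL, hH.eq, sub_self, smul_zero]

/-- if the fixed point set `F(T)` of `T_t = e^{tL}` (with `L` a GKSL
generator with operators `H, (Lℓ)`) is a von Neumann subalgebra of `B(H)`, then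
it coincides with the commutant of `{Lℓ, Lℓ*, H : ℓ}`. -/
theorem fixed_points_eq_commutant
    {Hs : Type} [NormedAddCommGroup Hs] [InnerProductSpace ℂ Hs] [CompleteSpace Hs]
    (N : ℕ) (H : Hs →L[ℂ] Hs) (hH : IsSelfAdjoint H)
    (L : Fin N → (Hs →L[ℂ] Hs))
    (𝓛 : (Hs →L[ℂ] Hs) →L[ℂ] (Hs →L[ℂ] Hs))
    (h𝓛 : ∀ y, 𝓛 y = Complex.I • (H * y - y * H) -
      (1/2 : ℂ) • ∑ ℓ, (star (L ℓ) * L ℓ * y - 2 * (star (L ℓ) * y * L ℓ) +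
        y * (star (L ℓ) * L ℓ)))
    -- `F(T)` is a von Neumann subalgebra
    (hvN : ∃ M : VonNeumannAlgebra Hs,
      (M : Set (Hs →L[ℂ] Hs)) =
        {x | ∀ t : ℝ, 0 ≤ t → NormedSpace.exp (t • 𝓛) x = x}) :
    {x : Hs →L[ℂ] Hs | ∀ t : ℝ, 0 ≤ t → NormedSpace.exp (t • 𝓛) x = x} =
      {x | (∀ ℓ, Commute x (L ℓ) ∧ Commute x (star (L ℓ))) ∧ Commute x H} :=
  fixed_points_eq_commutant_general N H L 𝓛 h𝓛 hvN
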